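/- arXiv:math/0403228 — 6 statements merged into one kernel-verified Lean document; each statement's English description precedes it below -/
import Mathlib

section
/- If a, b, D ∈ ℚ[x] satisfy a^2 - D·b^2 = k with k a nonzero constant, then a and b are relatively prime, and differentiating yields 2·a·a' - 2·b·b'·D - b^2·D' = 0; consequently b divides a' in ℚ[x]. -/
open Polynomial

theorem stmt_4 (D a b : ℚ[X]) (k : ℚ) (hk : k ≠ 0)
    (huk : a^2 - D * b^2 = C k) :
    IsCoprime a b ∧
    2 * a * (derivative a) - 2 * b * (derivative b) * D - b^2 * (derivative D) = 0 ∧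
    b ∣ derivative a := by
  have hC2 : (C (2:ℚ)) = 2 := by exact_mod_cast Polynomial.C_eq_natCast 2
  have hcop : IsCoprime a b := by
    refine ⟨C k⁻¹ * a, -(C k⁻¹ * D * b), ?_⟩
    have : C k⁻¹ * (a^2 - D * b^2) = 1 := by
      rw [huk, ← C_mul, inv_mul_cancel₀ hk, C_1]
    linear_combination this
  have hder : 2 * a * (derivative a) - 2 * b * (derivative b) * D - b^2 * (derivative D) = 0 := by
    have h := congrArg derivative huk
    simp only [derivative_sub, derivative_mul, derivative_pow, derivative_C] at h
    norm_num [hC2] at h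
    linear_combination h
  refine ⟨hcop, hder, ?_⟩
  have hdvd : a * (2 * derivative a) = b * (2 * derivative b * D + b * derivative D) := by
    linear_combination hder
  have h2 : b ∣ 2 * derivative a :=
    hcop.symm.dvd_of_dvd_mul_left ⟨_, hdvd⟩
  obtain ⟨c, hc⟩ := h2
  refine ⟨C (1/2) * c, ?_⟩
  have : C ((1:ℚ)/2) * (2 * derivative a) = C (1/2) * (b * c) := by rw [hc]
  rw [← mul_assoc, mul_comm (C ((1:ℚ)/2)) 2, ← hC2, ← C_mul] at this
  norm_num at this
  rw [this]; ring
end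

section
/- Let D ∈ ℚ[x] be monic of degree 2g+2, not a square, and suppose a, b ∈ ℚ[x] are nonzero monic (same leading coefficient 1) with a^2 - D·b^2 = k a nonzero constant and deg a = m ≥ g+1. Define f = a'/b (which is a polynomial since b divides a'). Then deg f = g and the leading coefficient of f equals m. -/
open Polynomial

theorem stmt_5 (g m : ℕ) (D a b f : ℚ[X]) (hD : D.Monic) (hdeg : D.natDegree = 2*g + 2)
    (hsq : ¬ ∃ e : ℚ[X], D = e^2) (ha : a.Monic) (hb : b.Monic)
    (k : ℚ) (hk : k ≠ 0) (huk : a^2 - D * b^2 = C k)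
    (hm : a.natDegree = m) (hmg : g + 1 ≤ m)
    (hf : derivative a = f * b) :
    f.natDegree = g ∧ f.leadingCoeff = (m : ℚ) := by
  have hm1 : 1 ≤ m := by omega
  have hb0 : b ≠ 0 := hb.ne_zero
  have hDb : D * b ^ 2 = a ^ 2 - C k := by linear_combination -huk
  have hDbdeg : (D * b ^ 2).natDegree = 2 * m := by
    rw [hDb, natDegree_sub_C, natDegree_pow, hm]
  have hbdeg : b.natDegree = m - g - 1 := by
    rw [natDegree_mul hD.ne_zero (pow_ne_zero 2 hb0), natDegree_pow, hdeg] at hDbdeg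
    omega
  have hcoeff : (derivative a).coeff (m - 1) = (m : ℚ) := by
    rw [coeff_derivative]
    have h1 : m - 1 + 1 = m := by omega
    rw [h1]
    have h2 : a.coeff m = 1 := by
      have := ha.coeff_natDegree; rwa [hm] at this
    rw [h2, one_mul]
    push_cast [Nat.cast_sub hm1]
    ring
  have hmQ : (m : ℚ) ≠ 0 := Nat.cast_ne_zero.mpr (by omega)
  have hda0 : derivative a ≠ 0 := by
    intro h; rw [h] at hcoeff; simp at hcoeff; exact hmQ hcoeff.symm
  have hdadeg : (derivative a).natDegree = m - 1 := by
    have hlt : (derivative a).natDegree < a.natDegree :=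
      natDegree_derivative_lt (by omega)
    have hge : m - 1 ≤ (derivative a).natDegree :=
      le_natDegree_of_ne_zero (by rw [hcoeff]; exact hmQ)
    omega
  have hf0 : f ≠ 0 := by
    intro h; rw [h, zero_mul] at hf; exact hda0 hf
  have hfb : f.natDegree + b.natDegree = m - 1 := by
    rw [← natDegree_mul hf0 hb0, ← hf, hdadeg]
  have hfdeg : f.natDegree = g := by omega
  refine ⟨hfdeg, ?_⟩
  have hlead : (derivative a).leadingCoeff = (m : ℚ) := by
    rw [leadingCoeff, hdadeg, hcoeff]
  rw [hf, leadingCoeff_mul, hb.leadingCoeff, mul_one] at hlead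
  exact hlead
end

section
/- Let D ∈ ℚ[x] be monic and squarefree of degree 2g+2, and suppose a, b ∈ ℚ[x] with a^2 - D·b^2 = k, k a nonzero rational, deg a = m > g. If m and g have the same parity, then k is a square in ℚ. -/
open Polynomial

theorem stmt_10 (g m : ℕ) (D a b : ℚ[X]) (hD : D.Monic) (hsf : Squarefree D)
    (hdeg : D.natDegree = 2*g + 2) (k : ℚ) (hk : k ≠ 0)
    (huk : a^2 - D * b^2 = C k) (hm : a.natDegree = m) (hmg : g < m)
    (hpar : m % 2 = g % 2) : IsSquare k := by
  have hb : b ≠ 0 := by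
    rintro rfl
    have h : a ^ 2 = C k := by linear_combination huk
    have := congrArg natDegree h
    rw [natDegree_pow, natDegree_C, hm] at this
    omega
  have key : a ^ 2 - C k = D * b ^ 2 := by linear_combination huk
  have h2m : (a ^ 2 - C k).natDegree = 2 * m := by
    rw [natDegree_sub_C, natDegree_pow, hm]
  have hnb : b.natDegree = m - g - 1 := by
    have h := congrArg natDegree key
    rw [h2m, natDegree_mul hD.ne_zero (pow_ne_zero 2 hb), natDegree_pow, hdeg] at h
    omega
  have hodd : b.natDegree % 2 = 1 := by omega
  let pb := AdjoinRoot.powerBasis hb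
  haveI : Module.Finite ℚ (AdjoinRoot b) := Module.Finite.of_basis pb.basis
  haveI : Module.Free ℚ (AdjoinRoot b) := Module.Free.of_basis pb.basis
  have hfr : Module.finrank ℚ (AdjoinRoot b) = b.natDegree := by
    rw [pb.finrank]
    simp [pb, AdjoinRoot.powerBasis]
  have hmk : (AdjoinRoot.mk b a) ^ 2 = algebraMap ℚ (AdjoinRoot b) k := by
    have hz : AdjoinRoot.mk b (D * b ^ 2) = 0 :=
      AdjoinRoot.mk_eq_zero.mpr ⟨D * b, by ring⟩
    rw [← map_pow, show a ^ 2 = D * b ^ 2 + C k by linear_combination huk, map_add, hz,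
      zero_add, AdjoinRoot.mk_C, AdjoinRoot.algebraMap_eq]
  have hnorm : (Algebra.norm ℚ (AdjoinRoot.mk b a)) ^ 2 = k ^ b.natDegree := by
    rw [← map_pow, hmk, Algebra.norm_algebraMap, hfr]
  obtain ⟨t, ht⟩ : ∃ t, b.natDegree = 2 * t + 1 := ⟨b.natDegree / 2, by omega⟩
  set c := Algebra.norm ℚ (AdjoinRoot.mk b a) with hc
  refine ⟨c / k ^ t, ?_⟩
  have hkey : k * (k ^ t) ^ 2 = c ^ 2 := by
    rw [hnorm, ht]; ring
  field_simp
  linear_combination hkey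
end

section
/- Let D ∈ ℚ[x] be monic and squarefree of degree 2g+2, and suppose a, b ∈ ℚ[x] with a^2 - D·b^2 = c^2 for some nonzero c ∈ ℚ, with deg a = m > g. Then there is a nonnegative integer s such that D factors in ℚ[x] as a product of two polynomials of degrees m - 2s and 2g + 2 + 2s - m respectively. In particular, if m is odd then D is reducible over ℚ. -/
open Polynomial

theorem stmt_11 (g m : ℕ) (D a b : ℚ[X]) (hD : D.Monic) (hsf : Squarefree D)
    (hdeg : D.natDegree = 2*g + 2) (c : ℚ) (hc : c ≠ 0)
    (huk : a^2 - D * b^2 = C (c^2)) (hm : a.natDegree = m) (hmg : g < m) :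
    (∃ s : ℕ, ∃ f h : ℚ[X], D = f * h ∧ f.natDegree + 2*s = m ∧
      h.natDegree + m = 2*g + 2 + 2*s) ∧
    (Odd m → ¬ Irreducible D) := by
  have hm1 : 1 ≤ m := by omega
  have hDne : D ≠ 0 := hD.ne_zero
  have hAdeg : (a - C c).natDegree = m := by rw [natDegree_sub_C, hm]
  have hBdeg : (a + C c).natDegree = m := by rw [natDegree_add_C, hm]
  have hAne : a - C c ≠ 0 := by
    intro h0; rw [h0, natDegree_zero] at hAdeg; omega
  have hBne : a + C c ≠ 0 := by
    intro h0; rw [h0, natDegree_zero] at hBdeg; omega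
  have hAB : (a - C c) * (a + C c) = D * b ^ 2 := by
    have huk' : a ^ 2 - D * b ^ 2 = (C c) ^ 2 := by rw [huk, map_pow]
    linear_combination huk'
  -- coprimality of a - C c and a + C c
  have h2c : (2 * c : ℚ) ≠ 0 := mul_ne_zero two_ne_zero hc
  have hcop : IsCoprime (a - C c) (a + C c) := by
    refine ⟨-C ((2*c)⁻¹), C ((2*c)⁻¹), ?_⟩
    have h1 : C ((2*c)⁻¹) * C (2*c) = 1 := by
      rw [← C_mul, inv_mul_cancel₀ h2c, C_1]
    have h2 : (C (2*c) : ℚ[X]) = C 2 * C c := by rw [← C_mul]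
    have h3 : (C 2 : ℚ[X]) = 2 := by exact map_ofNat C 2
    rw [← h1, h2, h3]; ring
  -- split D as a product of divisors of the two factors
  obtain ⟨f, h, hfA, hhB, hDfh⟩ :=
    exists_dvd_and_dvd_of_dvd_mul (⟨b ^ 2, hAB⟩ : D ∣ (a - C c) * (a + C c))
  obtain ⟨u, hu⟩ := hfA
  obtain ⟨v, hv⟩ := hhB
  have hfne : f ≠ 0 := by rintro rfl; rw [zero_mul] at hu; exact hAne hu
  have hune : u ≠ 0 := by rintro rfl; rw [mul_zero] at hu; exact hAne hu
  have hhne : h ≠ 0 := by rintro rfl; rw [mul_zero] at hDfh; exact hDne hDfh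
  have hvne : v ≠ 0 := by rintro rfl; rw [mul_zero] at hv; exact hBne hv
  have huv : u * v = b ^ 2 := by
    have : (f * h) * (u * v) = (f * h) * b ^ 2 := by
      rw [← hDfh]; calc D * (u * v) = (f * u) * (h * v) := by rw [hDfh]; ring
        _ = D * b ^ 2 := by rw [← hu, ← hv, hAB]
    exact mul_left_cancel₀ (mul_ne_zero hfne hhne) this
  have hcopuv : IsCoprime u v :=
    (hcop.of_isCoprime_of_dvd_left ⟨f, by rw [hu]; ring⟩).of_isCoprime_of_dvd_right
      ⟨h, by rw [hv]; ring⟩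
  obtain ⟨w, t, hwt⟩ := exists_associated_pow_of_mul_eq_pow
    (hcopuv.isUnit_of_dvd' (gcd_dvd_left u v) (gcd_dvd_right u v)) huv
  have hwne : w ≠ 0 := by
    rintro rfl; rw [zero_pow (by omega), zero_mul] at hwt; exact hune hwt.symm
  have hudeg : u.natDegree = 2 * w.natDegree := by
    have ht0 : ((t : ℚ[X])).natDegree = 0 := natDegree_eq_zero_of_isUnit t.isUnit
    rw [← hwt, natDegree_mul (pow_ne_zero 2 hwne) t.ne_zero, ht0, natDegree_pow]
    ring
  have hfu : f.natDegree + u.natDegree = m := by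
    rw [← hAdeg, hu, natDegree_mul hfne hune]
  have hfh : f.natDegree + h.natDegree = 2*g + 2 := by
    rw [← hdeg, hDfh, natDegree_mul hfne hhne]
  refine ⟨⟨w.natDegree, f, h, hDfh, by omega, by omega⟩, ?_⟩
  rintro ⟨k, hk⟩ hirr
  rcases hirr.isUnit_or_isUnit hDfh with hUnit | hUnit <;>
    · have := natDegree_eq_zero_of_isUnit hUnit; omega
end

section
/- Let D ∈ ℚ[x] be monic and squarefree of degree 2g+2, and suppose a, b ∈ ℚ[x] with a^2 - D·b^2 = k, where k ∈ ℚ is nonzero and not a square in ℚ, and deg a = m > g. Let c = √k generate the quadratic extension ℚ(c). Then D factors over ℚ(c) as a product of two polynomials of degree g+1 that are conjugate under the nontrivial automorphism of ℚ(c)/ℚ. -/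
/-!
Over `K = ℚ(c)` the norm equation `a² - D b² = k = c²` reads `D b² = (a - c)(a + c)`, and the
two factors on the right are coprime because their difference `2c` is a unit. Splitting `D`
accordingly gives monic `p ∣ a - c` and `q ∣ a + c` with `D = p q`. The conjugation `σ` fixes
`D` and swaps `a - c` with `a + c`, so `σ p` divides `D = p q` while being coprime to `p`;
hence `σ p ∣ q`, symmetrically `σ q ∣ p`, and comparing degrees gives `q = σ p`.
-/

open Polynomial

theorem IsCoprime.sub_add_of_isUnit_two_mul {R : Type*} [CommRing R] (x : R) {y : R}
    (hy : IsUnit (2 * y)) : IsCoprime (x - y) (x + y) := by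
  obtain ⟨w, hw⟩ := hy.exists_left_inv
  exact ⟨-w, w, by linear_combination hw⟩

theorem IsCoprime.dvd_of_dvd_mul_of_dvd_of_dvd {R : Type*} [CommRing R] {x y r s t : R}
    (hxy : IsCoprime x y) (hr : r ∣ x) (hs : s ∣ y) (h : s ∣ r * t) : s ∣ t :=
  ((hxy.of_isCoprime_of_dvd_left hr).of_isCoprime_of_dvd_right hs).symm.dvd_of_dvd_mul_left h

section Conjugation

variable {F K : Type*} [Field F] [Field K] [Algebra F K]

theorem exists_algHom_apply_eq_of_adjoin_eq_top {f : F[X]} (hf : Irreducible f) {c d : K}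
    (hgen : Algebra.adjoin F {c} = ⊤) (hc : aeval c f = 0) (hd : aeval d f = 0) :
    ∃ τ : K →ₐ[F] K, τ c = d := by
  have := Fact.mk hf
  let φ := AdjoinRoot.liftAlgHom f (Algebra.ofId F K) c hc
  have hφ : Function.Surjective φ := by
    rw [← AlgHom.range_eq_top, eq_top_iff, ← hgen, Algebra.adjoin_le_iff,
      Set.singleton_subset_iff]
    exact ⟨AdjoinRoot.root f, AdjoinRoot.liftAlgHom_root ..⟩
  let e := AlgEquiv.ofBijective φ ⟨φ.toRingHom.injective, hφ⟩
  refine ⟨(AdjoinRoot.liftAlgHom f (Algebra.ofId F K) d hd).comp e.symm, ?_⟩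
  have he : e.symm c = AdjoinRoot.root f :=
    e.symm_apply_eq.2 (AdjoinRoot.liftAlgHom_root f _ c hc).symm
  simpa [he] using AdjoinRoot.liftAlgHom_root f (Algebra.ofId F K) d hd

theorem exists_algEquiv_apply_eq_neg_of_sq_eq {k : F} (hk : ¬IsSquare k) {c : K}
    (hc : c ^ 2 = algebraMap F K k) (hgen : Algebra.adjoin F {c} = ⊤) :
    ∃ σ : K ≃ₐ[F] K, σ c = -c := by
  have hirr : Irreducible (X ^ 2 - C k) :=
    X_pow_sub_C_irreducible_of_prime Nat.prime_two fun r hr ↦ hk ⟨r, by rw [← hr, sq]⟩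
  obtain ⟨τ, hτ⟩ := exists_algHom_apply_eq_of_adjoin_eq_top hirr (d := -c) hgen
    (by simp [hc]) (by simp [hc])
  have hττ : τ.comp τ = AlgHom.id F K :=
    AlgHom.ext_of_adjoin_eq_top hgen fun x hx ↦ by
      rw [Set.mem_singleton_iff.1 hx]
      simp [hτ]
  exact ⟨AlgEquiv.ofAlgHom τ τ hττ hττ, hτ⟩

end Conjugation

section Factorization

variable {L : Type*} [Field L]

theorem exists_monic_mul_eq_dvd_dvd_of_dvd_mul {D u v : L[X]} (hD : D.Monic) (h : D ∣ u * v) :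
    ∃ p q : L[X], p.Monic ∧ q.Monic ∧ D = p * q ∧ p ∣ u ∧ q ∣ v := by
  classical
  obtain ⟨p, q, hpu, hqv, rfl⟩ := exists_dvd_and_dvd_of_dvd_mul h
  refine ⟨normalize p, normalize q, monic_normalize (left_ne_zero_of_mul hD.ne_zero),
    monic_normalize (right_ne_zero_of_mul hD.ne_zero), ?_, normalize_dvd_iff.2 hpu,
    normalize_dvd_iff.2 hqv⟩
  rw [← normalize_mul, hD.normalize_eq_self]

theorem exists_monic_mul_map_eq_of_dvd_mul (S : L →+* L) {D u v : L[X]} (hD : D.Monic)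
    (hDS : D.map S = D) (huv : IsCoprime u v) (hu : u.map S = v) (hv : v.map S = u)
    (h : D ∣ u * v) : ∃ p : L[X], p.Monic ∧ D = p * p.map S := by
  obtain ⟨p, q, hp, hq, rfl, hpu, hqv⟩ := exists_monic_mul_eq_dvd_dvd_of_dvd_mul hD h
  have hmap_dvd (r : L[X]) (hr : r ∣ p * q) : r.map S ∣ p * q := hDS ▸ map_dvd S hr
  have hσpq : p.map S ∣ q :=
    huv.dvd_of_dvd_mul_of_dvd_of_dvd hpu (hu ▸ map_dvd S hpu) (hmap_dvd p (dvd_mul_right p q))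
  have hσqp : q.map S ∣ p :=
    huv.symm.dvd_of_dvd_mul_of_dvd_of_dvd hqv (hv ▸ map_dvd S hqv)
      (mul_comm p q ▸ hmap_dvd q (dvd_mul_left q p))
  have hdeg (r : L[X]) : (r.map S).natDegree = r.natDegree :=
    natDegree_map_eq_of_injective S.injective r
  have hpq : p.natDegree ≤ q.natDegree := hdeg p ▸ natDegree_le_of_dvd hσpq hq.ne_zero
  have hqp : q.natDegree ≤ p.natDegree := hdeg q ▸ natDegree_le_of_dvd hσqp hp.ne_zero
  refine ⟨p, hp, ?_⟩
  rw [eq_of_monic_of_dvd_of_natDegree_le (hp.map S) hq hσpq (by rw [hdeg]; exact hqp)]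

end Factorization

theorem stmt_12_general (g : ℕ) (D a b : ℚ[X]) (hD : D.Monic)
    (hdeg : D.natDegree = 2*g + 2) (k : ℚ) (hks : ¬ IsSquare k)
    (huk : a^2 - D * b^2 = C k)
    (K : Type) [Field K] [Algebra ℚ K] (c : K) (hc : c^2 = algebraMap ℚ K k)
    (hgen : Algebra.adjoin ℚ ({c} : Set K) = ⊤) :
    ∃ σ : K ≃ₐ[ℚ] K, σ c = -c ∧
      ∃ p : K[X], p.natDegree = g + 1 ∧
        D.map (algebraMap ℚ K) = p * p.map (σ : K →+* K) := by
  obtain ⟨σ, hσ⟩ := exists_algEquiv_apply_eq_neg_of_sq_eq hks hc hgen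
  refine ⟨σ, hσ, ?_⟩
  set ι := algebraMap ℚ K
  have hfix (r : ℚ[X]) : (r.map ι).map (σ : K →+* K) = r.map ι := by
    rw [map_map]; congr 1; exact RingHom.ext σ.commutes
  have hc0 : c ≠ 0 := by
    rintro rfl
    exact hks ⟨0, ι.injective (by simp [← hc])⟩
  have hnorm : D.map ι * (b.map ι) ^ 2 = (a.map ι - C c) * (a.map ι + C c) := by
    have := congrArg (map ι) huk
    simp only [Polynomial.map_sub, Polynomial.map_mul, Polynomial.map_pow, map_C, ← hc,
      C_pow] at this
    linear_combination -this
  have h2c : IsUnit (2 * C c : K[X]) := by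
    have := charZero_of_injective_algebraMap ι.injective
    rw [show (2 : K[X]) * C c = C (2 * c) by rw [map_mul, map_ofNat]]
    exact isUnit_C.2 (mul_ne_zero two_ne_zero hc0).isUnit
  obtain ⟨p, hp, hDp⟩ :=
    exists_monic_mul_map_eq_of_dvd_mul (σ : K →+* K) (hD.map ι) (hfix D)
      (IsCoprime.sub_add_of_isUnit_two_mul _ h2c) (by simp [hfix, hσ, sub_eq_add_neg])
      (by simp [hfix, hσ, sub_eq_add_neg]) ⟨_, hnorm.symm⟩
  refine ⟨p, ?_, hDp⟩
  have := congrArg natDegree hDp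
  rw [natDegree_map_eq_of_injective ι.injective, natDegree_mul hp.ne_zero (hp.map _).ne_zero,
    natDegree_map_eq_of_injective (σ : K →+* K).injective] at this
  omega

theorem stmt_12 (g m : ℕ) (D a b : ℚ[X]) (hD : D.Monic) (hsf : Squarefree D)
    (hdeg : D.natDegree = 2*g + 2) (k : ℚ) (hk : k ≠ 0) (hks : ¬ IsSquare k)
    (huk : a^2 - D * b^2 = C k) (hm : a.natDegree = m) (hmg : g < m)
    (K : Type) [Field K] [Algebra ℚ K] (c : K) (hc : c^2 = algebraMap ℚ K k)
    (hgen : Algebra.adjoin ℚ ({c} : Set K) = ⊤) :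
    ∃ σ : K ≃ₐ[ℚ] K, σ c = -c ∧
      ∃ p : K[X], p.natDegree = g + 1 ∧
        D.map (algebraMap ℚ K) = p * p.map (σ : K →+* K) :=
  stmt_12_general g D a b hD hdeg k hks huk K c hc hgen
end

section
/- Let D ∈ ℚ[x] be monic, squarefree, of even degree 2g+2 ≥ 4, irreducible over ℚ, with Galois group the full symmetric group S_{2g+2}. Then there are no polynomials a, b ∈ ℚ[x] with b ≠ 0 and a^2 - D·b^2 equal to a nonzero constant; i.e., ℚ[x, √D] has no nontrivial units. -/
/-!
Let `n = deg D`. At a root `α` of `D`, `a(α)` is a square root of `k`. If `k` were not a square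
in the base field `K`, then `F = K(√k)` would be a quadratic subfield of the splitting field `L`,
and `α` would be a root of `(a mod D) - √k ∈ F[X]`, so `D` would factor over `F` as `P * Q` with
both factors nonconstant. Then `[L : F] ≤ (deg P)! (deg Q)! ≤ (n - 1)!`, while `[L : F] = n! / 2`
because `Gal(D) ≅ Sₙ`; this is impossible for `n ≥ 3`.

So `k = s²`, and after changing the sign of `s` we have `a - s = D q`. With `r = a + s` we get
`q r = b²` and `r - D q = 2 s`, so `q` and `r` are coprime, hence `q = u d²`, `r = v e²`, and
`u v` is a square `μ²`. Then `(μ e)² - D (u d)² = 2 s u` is a new solution with `deg d < deg b`,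
and infinite descent on `deg b` finishes the proof.
-/

open Polynomial Module IntermediateField
open scoped Nat

theorem Nat.factorial_succ_mul_factorial_succ_le (a b : ℕ) :
    (a + 1)! * (b + 1)! ≤ (a + b + 1)! := by
  have hchoose : a + 1 ≤ (b + 1 + a).choose a := by
    calc a + 1 = (a + 1).choose a := (Nat.choose_succ_self_right a).symm
      _ ≤ (b + 1 + a).choose a := Nat.choose_le_choose a (by omega)
  calc (a + 1)! * (b + 1)! = (a + 1) * (b + 1)! * a ! := by rw [Nat.factorial_succ]; ring
    _ ≤ (b + 1 + a).choose a * (b + 1)! * a ! := by gcongr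
    _ = (a + b + 1)! := by rw [Nat.add_choose_mul_factorial_mul_factorial]; ring_nf

namespace Polynomial

namespace Gal
variable {F : Type*} [Field F]

theorem card_le_factorial_natDegree (p : F[X]) : Nat.card p.Gal ≤ p.natDegree ! := by
  have : Fact ((p.map (algebraMap F p.SplittingField)).Splits) := ⟨SplittingField.splits p⟩
  calc Nat.card p.Gal ≤ Nat.card (Equiv.Perm (p.rootSet p.SplittingField)) :=
        Nat.card_le_card_of_injective _ (galActionHom_injective p p.SplittingField)
    _ = (p.rootSet p.SplittingField).ncard ! := by rw [Nat.card_perm, Nat.card_coe_set_eq]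
    _ ≤ p.natDegree ! := Nat.factorial_le (ncard_rootSet_le p _)

theorem card_mul_le_factorial_mul_factorial (p q : F[X]) :
    Nat.card (p * q).Gal ≤ p.natDegree ! * q.natDegree ! :=
  calc Nat.card (p * q).Gal ≤ Nat.card (p.Gal × q.Gal) :=
        Nat.card_le_card_of_injective _ (restrictProd_injective p q)
    _ ≤ p.natDegree ! * q.natDegree ! := by
      rw [Nat.card_prod]
      exact Nat.mul_le_mul (card_le_factorial_natDegree p) (card_le_factorial_natDegree q)

end Gal

theorem IsSplittingField.finrank_le_factorial_mul_factorial {F L : Type*} [Field F] [Field L]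
    [Algebra F L] {p q : F[X]} [IsSplittingField F L (p * q)] (hsep : (p * q).Separable) :
    finrank F L ≤ p.natDegree ! * q.natDegree ! := by
  rw [(IsSplittingField.algEquiv L (p * q)).toLinearEquiv.finrank_eq,
    ← Gal.card_of_separable hsep]
  exact Gal.card_mul_le_factorial_mul_factorial p q

variable {K : Type*} [Field K] {D : K[X]}

theorem natDegree_le_natDegree_minpoly_of_finrank_eq_two (hsep : D.Separable)
    (hn : 3 ≤ D.natDegree) (hcard : Nat.card D.Gal = D.natDegree !)
    {F : IntermediateField K D.SplittingField} (hF : finrank K F = 2) {α : D.SplittingField}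
    (hα : aeval α D = 0) :
    D.natDegree ≤ (minpoly F α).natDegree := by
  by_contra! hlt
  have hαF : IsIntegral F α := .of_finite F α
  obtain ⟨Q, hPQ⟩ : minpoly F α ∣ D.map (algebraMap K F) :=
    minpoly.dvd _ _ (by rw [aeval_map_algebraMap, hα])
  have hD0 : D.map (algebraMap K F) ≠ 0 := Polynomial.map_ne_zero (by rintro rfl; simp at hn)
  have hQ0 : Q ≠ 0 := by rintro rfl; exact hD0 (by rw [hPQ, mul_zero])
  have hdeg : (minpoly F α).natDegree + Q.natDegree = D.natDegree := by
    rw [← natDegree_map (algebraMap K F) (p := D), hPQ, natDegree_mul (minpoly.ne_zero hαF) hQ0]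
  obtain ⟨p, hp⟩ := Nat.exists_eq_add_one.mpr (minpoly.natDegree_pos hαF)
  obtain ⟨q, hq⟩ := Nat.exists_eq_add_one.mpr (show 0 < Q.natDegree by omega)
  have : IsSplittingField F D.SplittingField (minpoly F α * Q) := hPQ ▸ inferInstance
  have hle := IsSplittingField.finrank_le_factorial_mul_factorial (L := D.SplittingField)
    (hPQ ▸ hsep.map)
  have htower : 2 * finrank F D.SplittingField = D.natDegree ! := by
    rw [← hF, finrank_mul_finrank, ← Gal.card_of_separable hsep, hcard]
  rw [hp, hq] at hle
  rw [← hdeg, hp, hq, show p + 1 + (q + 1) = p + q + 1 + 1 by ring, Nat.factorial_succ] at htower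
  have hbound : (p + q + 1 + 1) * (p + q + 1)! ≤ 2 * (p + q + 1)! :=
    calc (p + q + 1 + 1) * (p + q + 1)! = 2 * finrank F D.SplittingField := htower.symm
      _ ≤ 2 * ((p + 1)! * (q + 1)!) := by gcongr
      _ ≤ 2 * (p + q + 1)! := by gcongr; exact Nat.factorial_succ_mul_factorial_succ_le p q
  have := Nat.le_of_mul_le_mul_right hbound (Nat.factorial_pos _)
  omega

theorem isSquare_of_sq_sub_mul_sq_eq_C (hsep : D.Separable) (hn : 3 ≤ D.natDegree)
    (hcard : Nat.card D.Gal = D.natDegree !) {a b : K[X]} {k : K} (h : a ^ 2 - D * b ^ 2 = C k) :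
    IsSquare k := by
  by_contra hk
  obtain ⟨α, hα⟩ : ∃ α : D.SplittingField, aeval α D = 0 := by
    obtain ⟨α, hα⟩ := (SplittingField.splits D).exists_eval_eq_zero
      (by rw [degree_map, degree_eq_natDegree (by rintro rfl; simp at hn)]; norm_cast; omega)
    exact ⟨α, by rwa [aeval_def, eval₂_eq_eval_map]⟩
  set β := aeval α (a % D) with hβdef
  have hβ : β ^ 2 = algebraMap K _ k := by
    have := congrArg (aeval α) h
    simp only [map_sub, map_mul, map_pow, hα, zero_mul, sub_zero, aeval_C] at this
    rw [← this, hβdef, EuclideanDomain.mod_eq_sub_mul_div, map_sub, map_mul, hα, zero_mul,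
      sub_zero]
  have hβK : ∀ c : K, algebraMap K _ c ≠ β := fun c hc =>
    hk ⟨c, (algebraMap K D.SplittingField).injective (by rw [← hβ, ← hc]; simp [sq])⟩
  have hmin : minpoly K β = X ^ 2 - C k := by
    have hirr : Irreducible (X ^ 2 - C k) :=
      X_pow_sub_C_irreducible_of_prime Nat.prime_two fun c hc => hk ⟨c, by rw [← hc, sq]⟩
    exact (minpoly.eq_of_irreducible_of_monic hirr (by simp [hβ])
      (monic_X_pow_sub_C _ two_ne_zero)).symm
  have hF : finrank K K⟮β⟯ = 2 := by
    rw [adjoin.finrank (.of_finite K β), hmin, natDegree_X_pow_sub_C]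
  set f := (a % D).map (algebraMap K K⟮β⟯) - C (AdjoinSimple.gen K β)
  have hf0 : f ≠ 0 := fun hf => hβK ((a % D).coeff 0) <| by
    have := congrArg (fun p => algebraMap K⟮β⟯ D.SplittingField (p.coeff 0)) hf
    simpa [f, sub_eq_zero, ← IsScalarTower.algebraMap_apply] using this
  have hfα : aeval α f = 0 := by simp [f, aeval_map_algebraMap, β]
  have hfdeg : f.natDegree < D.natDegree := by
    have := natDegree_mod_lt a (q := D) (by omega)
    refine (natDegree_sub_le _ _).trans_lt ?_
    simp only [natDegree_map, natDegree_C]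
    omega
  have := natDegree_le_of_dvd (minpoly.dvd _ _ hfα) hf0
  have := natDegree_le_natDegree_minpoly_of_finrank_eq_two hsep hn hcard hF hα
  omega

theorem isSquare_of_sq_eq_C_mul_sq {b e : K[X]} {c : K} (he : e ≠ 0) (h : b ^ 2 = C c * e ^ 2) :
    IsSquare c := by
  have hlc := congrArg leadingCoeff h
  rw [leadingCoeff_mul, leadingCoeff_C, leadingCoeff_pow, leadingCoeff_pow] at hlc
  have he' := pow_ne_zero 2 (leadingCoeff_ne_zero.mpr he)
  exact ⟨b.leadingCoeff / e.leadingCoeff, by rw [← sq, div_pow, eq_div_iff he', hlc]⟩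

theorem exists_eq_C_mul_sq_of_isCoprime {q r b : K[X]} (hqr : IsCoprime q r) (h : q * r = b ^ 2) :
    ∃ u : K, ∃ d : K[X], u ≠ 0 ∧ q = C u * d ^ 2 := by
  obtain ⟨d, w, hw⟩ := exists_associated_pow_of_mul_eq_pow' hqr h
  obtain ⟨u, hu, hC⟩ := isUnit_iff.mp w.isUnit
  exact ⟨u, d, hu.ne_zero, by rw [← hw, ← hC, mul_comm]⟩

variable [NeZero (2 : K)]

theorem exists_sq_sub_mul_sq_eq_C_natDegree_lt_of_dvd (hD : Irreducible D) {a b : K[X]} {s : K}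
    (hb : b ≠ 0) (hs : s ≠ 0) (h : a ^ 2 - D * b ^ 2 = C (s * s)) (hdvd : D ∣ a - C s) :
    ∃ a' b' : K[X], ∃ k' : K, b' ≠ 0 ∧ k' ≠ 0 ∧ a' ^ 2 - D * b' ^ 2 = C k' ∧
      b'.natDegree < b.natDegree := by
  obtain ⟨q, hq⟩ := hdvd
  set r := a + C s
  have hr : r = D * q + C (2 * s) := by rw [← hq, map_mul, map_ofNat]; ring
  have hqr : q * r = b ^ 2 := mul_left_cancel₀ hD.ne_zero <| by
    rw [← mul_assoc, ← hq, ← sub_eq_zero, ← sub_eq_zero.mpr h, map_mul]; ring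
  have hcop : IsCoprime q r := by
    have h2s : C (2 * s)⁻¹ * C (2 * s) = 1 := by
      rw [← map_mul, inv_mul_cancel₀ (mul_ne_zero two_ne_zero hs), map_one]
    exact ⟨-C (2 * s)⁻¹ * D, C (2 * s)⁻¹, by rw [hr]; linear_combination h2s⟩
  obtain ⟨u, d, hu, hqd⟩ := exists_eq_C_mul_sq_of_isCoprime hcop hqr
  obtain ⟨v, e, -, hre⟩ := exists_eq_C_mul_sq_of_isCoprime hcop.symm (by rw [mul_comm, hqr])
  have hb2 : b ^ 2 ≠ 0 := pow_ne_zero 2 hb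
  have hq0 : q ≠ 0 := by rintro rfl; exact hb2 (by rw [← hqr, zero_mul])
  have hr0 : r ≠ 0 := fun hr0 => hb2 (by rw [← hqr, hr0, mul_zero])
  have hd : d ≠ 0 := by rintro rfl; simp [hqd] at hq0
  have he : e ≠ 0 := by rintro rfl; simp [hre] at hr0
  obtain ⟨μ, hμ⟩ := isSquare_of_sq_eq_C_mul_sq (b := b) (mul_ne_zero hd he) (c := u * v) <| by
    rw [← hqr, hqd, hre, map_mul]; ring
  have hμC : C u * C v = C μ * C μ := by rw [← map_mul, hμ, map_mul]
  refine ⟨C μ * e, C u * d, 2 * s * u, mul_ne_zero (C_ne_zero.mpr hu) hd,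
    mul_ne_zero (mul_ne_zero two_ne_zero hs) hu, ?_, ?_⟩
  · rw [map_mul C (2 * s) u]
    linear_combination (-e ^ 2) * hμC - C u * (hre - D * hqd - hr)
  · have hdegb : 2 * b.natDegree = q.natDegree + r.natDegree := by
      rw [← natDegree_pow, ← hqr, natDegree_mul hq0 hr0]
    have hdegr : r.natDegree = D.natDegree + q.natDegree := by
      rw [hr, natDegree_add_C, natDegree_mul hD.ne_zero hq0]
    have hdegq : q.natDegree = 2 * d.natDegree := by
      rw [hqd, natDegree_C_mul hu, natDegree_pow]
    have := hD.natDegree_pos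
    rw [natDegree_C_mul hu]
    omega

theorem exists_sq_sub_mul_sq_eq_C_natDegree_lt (hD : Irreducible D) {a b : K[X]} {k : K}
    (hb : b ≠ 0) (hk : k ≠ 0) (hsq : IsSquare k) (h : a ^ 2 - D * b ^ 2 = C k) :
    ∃ a' b' : K[X], ∃ k' : K, b' ≠ 0 ∧ k' ≠ 0 ∧ a' ^ 2 - D * b' ^ 2 = C k' ∧
      b'.natDegree < b.natDegree := by
  obtain ⟨s, rfl⟩ := hsq
  have hs : s ≠ 0 := by rintro rfl; simp at hk
  have hfac : (a - C s) * (a + C s) = D * b ^ 2 := by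
    rw [← sub_eq_zero, ← sub_eq_zero.mpr h, map_mul]; ring
  rcases hD.prime.dvd_or_dvd (Dvd.intro _ hfac.symm) with hdvd | hdvd
  · exact exists_sq_sub_mul_sq_eq_C_natDegree_lt_of_dvd hD hb hs h hdvd
  · exact exists_sq_sub_mul_sq_eq_C_natDegree_lt_of_dvd hD hb (neg_ne_zero.mpr hs)
      (by rwa [neg_mul_neg]) (by rwa [map_neg, sub_neg_eq_add])

theorem sq_sub_mul_sq_ne_C (hD : Irreducible D)
    (hsq : ∀ (a b : K[X]) (k : K), a ^ 2 - D * b ^ 2 = C k → IsSquare k) (a : K[X]) {b : K[X]}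
    (hb : b ≠ 0) {k : K} (hk : k ≠ 0) : a ^ 2 - D * b ^ 2 ≠ C k := by
  induction hn : b.natDegree using Nat.strong_induction_on generalizing a b k with
  | _ n ih =>
    intro h
    obtain ⟨a', b', k', hb', hk', h', hlt⟩ :=
      exists_sq_sub_mul_sq_eq_C_natDegree_lt hD hb hk (hsq a b k h) h
    exact ih b'.natDegree (hn ▸ hlt) a' hb' hk' rfl h'

end Polynomial

theorem stmt_13_general (g : ℕ) (D : ℚ[X])
    (hdeg : D.natDegree = 2*g + 2) (hdeg4 : 4 ≤ 2*g + 2)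
    (hirr : Irreducible D)
    (hgal : Nonempty (D.Gal ≃* Equiv.Perm (Fin (2*g + 2)))) :
    ¬ ∃ a b : ℚ[X], b ≠ 0 ∧ ∃ k : ℚ, k ≠ 0 ∧ a^2 - D * b^2 = C k := by
  obtain ⟨e⟩ := hgal
  have hsep : D.Separable := PerfectField.separable_of_irreducible hirr
  have hcard : Nat.card D.Gal = D.natDegree ! := by
    rw [Nat.card_congr e.toEquiv, Nat.card_perm, Nat.card_fin, hdeg]
  rintro ⟨a, b, hb, k, hk, h⟩
  exact sq_sub_mul_sq_ne_C hirr
    (fun _ _ _ => isSquare_of_sq_sub_mul_sq_eq_C hsep (by omega) hcard) a hb hk h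

theorem stmt_13 (g : ℕ) (D : ℚ[X]) (hD : D.Monic) (hsf : Squarefree D)
    (hdeg : D.natDegree = 2*g + 2) (hdeg4 : 4 ≤ 2*g + 2)
    (hirr : Irreducible D)
    (hgal : Nonempty (D.Gal ≃* Equiv.Perm (Fin (2*g + 2)))) :
    ¬ ∃ a b : ℚ[X], b ≠ 0 ∧ ∃ k : ℚ, k ≠ 0 ∧ a^2 - D * b^2 = C k :=
  stmt_13_general g D hdeg hdeg4 hirr hgal
end
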